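/- Let F be a finite nonempty set of finite simple graphs none of which is a complete graph. For each H ∈ F, let H′ denote the graph obtained from H by deleting all universal vertices of H, and let F′ = {H′ : H ∈ F}. Let ℓ be the maximum number of universal vertices of any graph in F. Let G = (V, E) be a finite simple graph, let k ∈ ℕ, and let G′ be the graph obtained from Φ(G) by adding k + ℓ new vertices, each adjacent to every other vertex of G′. Then there exists X ⊆ V with |X| ≤ k such that G − X is F′-free, if and only if there exists a set X′ of vertices of G′ with |X′| ≤ k such that G′ − X′ is F-free. -/
import Mathlib


/-- The blockers of `Φ(G)`: one new vertex for each unordered pair of distinct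
non-adjacent vertices of `G`. -/
def Blocker {V : Type} (G : SimpleGraph V) : Type :=
  {e : Sym2 V // ¬ e.IsDiag ∧ e ∉ G.edgeSet}

/-- The transformation `Φ`: the graph on `V ⊕ B` containing all edges of `G`,
in which every blocker is adjacent to all other vertices. -/
def Phi {V : Type} (G : SimpleGraph V) : SimpleGraph (V ⊕ Blocker G) :=
  SimpleGraph.fromRel (fun x y =>
    match x, y with
    | Sum.inl u, Sum.inl v => G.Adj u v
    | _, _ => True)

/-- Adding `m` new vertices to `H`, each adjacent to every other vertex. -/
def addUniv {W : Type} (H : SimpleGraph W) (m : ℕ) : SimpleGraph (W ⊕ Fin m) :=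
  SimpleGraph.fromRel (fun x y =>
    match x, y with
    | Sum.inl a, Sum.inl b => H.Adj a b
    | _, _ => True)

/-- The set of universal vertices of a graph. -/
def univVerts {W : Type} (H : SimpleGraph W) : Set W :=
  {v | ∀ w, w ≠ v → H.Adj v w}

lemma addUniv_adj {W : Type} (H : SimpleGraph W) (m : ℕ) (x y : W ⊕ Fin m) :
    (addUniv H m).Adj x y ↔ x ≠ y ∧ ∀ a b, x = Sum.inl a → y = Sum.inl b → H.Adj a b := by
  unfold addUniv
  rw [SimpleGraph.fromRel_adj]
  cases x <;> cases y <;> simp [H.adj_comm]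


lemma phi_adj {V : Type} (G : SimpleGraph V) (x y : V ⊕ Blocker G) :
    (Phi G).Adj x y ↔ x ≠ y ∧ ∀ a b, x = Sum.inl a → y = Sum.inl b → G.Adj a b := by
  unfold Phi
  rw [SimpleGraph.fromRel_adj]
  cases x <;> cases y <;> simp [G.adj_comm]


lemma Gp_adj {V : Type} (G : SimpleGraph V) (m : ℕ) (x y : (V ⊕ Blocker G) ⊕ Fin m) :
    (addUniv (Phi G) m).Adj x y ↔
      x ≠ y ∧ ∀ u v, x = Sum.inl (Sum.inl u) → y = Sum.inl (Sum.inl v) → G.Adj u v := by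
  rw [addUniv_adj]
  constructor
  · rintro ⟨hne, h⟩
    refine ⟨hne, fun u v hx hy => ?_⟩
    exact ((phi_adj G _ _).1 (h _ _ hx hy)).2 u v rfl rfl
  · rintro ⟨hne, h⟩
    refine ⟨hne, fun a b hx hy => ?_⟩
    rw [phi_adj]
    refine ⟨fun hab => hne (by rw [hx, hy, hab]), fun u v h1 h2 => ?_⟩
    exact h u v (by rw [hx, h1]) (by rw [hy, h2])

lemma Gp_adj_VV {V : Type} (G : SimpleGraph V) (m : ℕ) (u v : V) :
    (addUniv (Phi G) m).Adj (Sum.inl (Sum.inl u)) (Sum.inl (Sum.inl v)) ↔ G.Adj u v := by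
  rw [Gp_adj]
  constructor
  · rintro ⟨-, h⟩; exact h u v rfl rfl
  · intro h
    refine ⟨by simp [h.ne], ?_⟩
    rintro a b ha hb
    simp only [Sum.inl.injEq] at ha hb
    rwa [← ha, ← hb]

lemma Gp_not_adj {V : Type} (G : SimpleGraph V) (m : ℕ) {x y : (V ⊕ Blocker G) ⊕ Fin m}
    (hne : x ≠ y) (hna : ¬ (addUniv (Phi G) m).Adj x y) :
    ∃ u v, x = Sum.inl (Sum.inl u) ∧ y = Sum.inl (Sum.inl v) ∧ ¬ G.Adj u v := by
  rw [Gp_adj] at hna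
  push_neg at hna
  exact hna hne

lemma mem_univVerts_compl {W : Type} (H : SimpleGraph W) (v : W) :
    v ∈ (univVerts H)ᶜ ↔ ∃ w, w ≠ v ∧ ¬ H.Adj v w := by
  simp only [univVerts, Set.mem_compl_iff, Set.mem_setOf_eq]
  push_neg
  rfl

instance blockerFinite {V : Type} [Finite V] (G : SimpleGraph V) : Finite (Blocker G) := by
  unfold Blocker; infer_instance

theorem stmt_11 {V ι : Type} [Fintype V] [Fintype ι] [Nonempty ι]
    -- the finite nonempty family `F` of finite graphs
    (nF : ι → ℕ) (F : ∀ i, SimpleGraph (Fin (nF i)))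
    -- no graph in `F` is complete
    (hnc : ∀ i, ∃ u v : Fin (nF i), u ≠ v ∧ ¬ (F i).Adj u v)
    -- `ℓ` is the maximum number of universal vertices of any graph in `F`
    (ℓ : ℕ) (hub : ∀ i, (univVerts (F i)).ncard ≤ ℓ)
    (hmax : ∃ i, (univVerts (F i)).ncard = ℓ)
    (G : SimpleGraph V) (k : ℕ) :
    -- `G − X` is `F′`-free for some `X ⊆ V` with `|X| ≤ k` …
    (∃ X : Set V, X.ncard ≤ k ∧
        ∀ i, ¬ Nonempty ((F i).induce (univVerts (F i))ᶜ ↪g G.induce Xᶜ)) ↔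
      -- … iff `G′ − X′` is `F`-free for some `X′` with `|X′| ≤ k`,
      -- where `G′` is `Φ(G)` plus `k + ℓ` additional universal vertices.
      (∃ X' : Set ((V ⊕ Blocker G) ⊕ Fin (k + ℓ)), X'.ncard ≤ k ∧
        ∀ i, ¬ Nonempty ((F i) ↪g (addUniv (Phi G) (k + ℓ)).induce X'ᶜ)) := by
  classical
  constructor
  · rintro ⟨X, hXk, hfree⟩
    refine ⟨(fun v => Sum.inl (Sum.inl v)) '' X, ?_, ?_⟩
    · rw [Set.ncard_image_of_injective X (fun a b h => by simpa using h)]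
      exact hXk
    · rintro i ⟨f⟩
      apply hfree i
      have key : ∀ v : ((univVerts (F i))ᶜ : Set (Fin (nF i))),
          ∃ u : V, u ∈ Xᶜ ∧ (f ↑v : (V ⊕ Blocker G) ⊕ Fin (k + ℓ)) = Sum.inl (Sum.inl u) := by
        rintro ⟨v, hv⟩
        rw [mem_univVerts_compl] at hv
        obtain ⟨w, hwv, hna⟩ := hv
        have hne : (f v : (V ⊕ Blocker G) ⊕ Fin (k + ℓ)) ≠ ↑(f w) := by
          intro h
          exact hwv.symm (f.injective (Subtype.ext h))
        have hna' : ¬ (addUniv (Phi G) (k + ℓ)).Adj ↑(f v) ↑(f w) := by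
          intro h
          exact hna (f.map_rel_iff.1 h)
        obtain ⟨u, u', hu, hu', hG⟩ := Gp_not_adj G (k + ℓ) hne hna'
        refine ⟨u, ?_, hu⟩
        intro huX
        have := (f v).2
        rw [hu] at this
        exact this ⟨u, huX, rfl⟩
      choose φ hφX hφ using key
      refine ⟨⟨⟨fun v => ⟨φ v, hφX v⟩, ?_⟩, ?_⟩⟩
      · intro a b hab
        simp only [Subtype.mk.injEq] at hab
        have : (f ↑a : (V ⊕ Blocker G) ⊕ Fin (k + ℓ)) = ↑(f ↑b) := by
          rw [hφ a, hφ b, hab]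
        exact Subtype.ext (f.injective (Subtype.ext this))
      · intro a b
        show G.Adj (φ a) (φ b) ↔ (F i).Adj ↑a ↑b
        rw [← Gp_adj_VV G (k + ℓ), ← hφ a, ← hφ b]
        exact f.map_rel_iff
  · rintro ⟨X', hX'k, hfree⟩
    refine ⟨{v | Sum.inl (Sum.inl v) ∈ X'}, ?_, ?_⟩
    · refine le_trans (Set.ncard_le_ncard_of_injOn (fun v => Sum.inl (Sum.inl v))
        (fun a ha => ha) (fun a _ b _ h => by simpa using h) (Set.toFinite X')) hX'k
    · rintro i ⟨g⟩
      apply hfree i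
      set U := univVerts (F i) with hU
      set S : Set (Fin (k + ℓ)) := {j | Sum.inr j ∈ X'}ᶜ with hS
      -- cardinality of S
      have hT : ({j : Fin (k + ℓ) | Sum.inr j ∈ X'}).ncard ≤ k := by
        refine le_trans (Set.ncard_le_ncard_of_injOn (fun j => Sum.inr j)
          (fun a ha => ha) (fun a _ b _ h => by simpa using h) (Set.toFinite X')) hX'k
      have hcompl := Set.ncard_add_ncard_compl {j : Fin (k + ℓ) | Sum.inr j ∈ X'}
        (Set.toFinite _) (Set.toFinite _)
      have hScard : ℓ ≤ S.ncard := by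
        rw [Nat.card_eq_fintype_card, Fintype.card_fin, ← hS] at hcompl
        omega
      -- an injection from U into S
      have : Nonempty (↥U ↪ ↥S) := by
        have h1 : Fintype ↥U := Fintype.ofFinite _
        have h2 : Fintype ↥S := Fintype.ofFinite _
        apply Function.Embedding.nonempty_of_card_le
        rw [← Nat.card_eq_fintype_card, ← Nat.card_eq_fintype_card,
          Nat.card_coe_set_eq, Nat.card_coe_set_eq]
        exact le_trans (hub i) hScard
      obtain ⟨ψ⟩ := this
      -- the embedding
      have hmem : ∀ v : Fin (nF i), ∀ hv : v ∈ U,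
          (Sum.inr ↑(ψ ⟨v, hv⟩) : (V ⊕ Blocker G) ⊕ Fin (k + ℓ)) ∈ X'ᶜ := by
        intro v hv
        exact (ψ ⟨v, hv⟩).2
      have hmem2 : ∀ v : Fin (nF i), ∀ hv : v ∉ U,
          (Sum.inl (Sum.inl ↑(g ⟨v, hv⟩)) : (V ⊕ Blocker G) ⊕ Fin (k + ℓ)) ∈ X'ᶜ := by
        intro v hv
        exact (g ⟨v, hv⟩).2
      set h : Fin (nF i) → ↥(X'ᶜ) := fun v =>
        if hv : v ∈ U then ⟨Sum.inr ↑(ψ ⟨v, hv⟩), hmem v hv⟩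
        else ⟨Sum.inl (Sum.inl ↑(g ⟨v, hv⟩)), hmem2 v hv⟩ with hh
      have hinj : Function.Injective h := by
        intro a b hab
        by_cases ha : a ∈ U <;> by_cases hb : b ∈ U <;>
          simp only [hh, dif_pos, dif_neg, ha, hb, Subtype.mk.injEq] at hab
        · have : (⟨a, ha⟩ : ↥U) = ⟨b, hb⟩ := ψ.injective (Subtype.ext (by simpa using hab))
          simpa using this
        · simp at hab
        · simp at hab
        · have : (⟨a, ha⟩ : ↥(Uᶜ)) = ⟨b, hb⟩ :=
            g.injective (Subtype.ext (by simpa using hab))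
          simpa using this
      refine ⟨⟨⟨h, hinj⟩, ?_⟩⟩
      intro a b
      show (addUniv (Phi G) (k + ℓ)).Adj ↑(h a) ↑(h b) ↔ (F i).Adj a b
      by_cases hab : a = b
      · subst hab
        simp
      · have hne : (↑(h a) : (V ⊕ Blocker G) ⊕ Fin (k + ℓ)) ≠ ↑(h b) :=
          fun hc => hab (hinj (Subtype.ext hc))
        by_cases ha : a ∈ U
        · constructor
          · intro _; exact ha b (Ne.symm hab)
          · intro _
            rw [Gp_adj]
            refine ⟨hne, fun u v hx hy => ?_⟩
            rw [hh] at hx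
            simp only [dif_pos ha] at hx
            exact absurd hx (by simp)
        · by_cases hb : b ∈ U
          · constructor
            · intro _; exact ((F i).adj_comm b a).1 (hb a hab)
            · intro _
              rw [Gp_adj]
              refine ⟨hne, fun u v hx hy => ?_⟩
              rw [hh] at hy
              simp only [dif_pos hb] at hy
              exact absurd hy (by simp)
          · have hha : (↑(h a) : (V ⊕ Blocker G) ⊕ Fin (k + ℓ))
                = Sum.inl (Sum.inl ↑(g ⟨a, ha⟩)) := by rw [hh]; simp [dif_neg ha]
            have hhb : (↑(h b) : (V ⊕ Blocker G) ⊕ Fin (k + ℓ))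
                = Sum.inl (Sum.inl ↑(g ⟨b, hb⟩)) := by rw [hh]; simp [dif_neg hb]
            rw [hha, hhb, Gp_adj_VV]
            have := g.map_rel_iff (a := ⟨a, ha⟩) (b := ⟨b, hb⟩)
            exact this.trans (by rfl)
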